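/- arXiv:math/0606239 — 6 statements merged into one kernel-verified Lean document; each statement's English description precedes it below -/
import Mathlib

section
/- Let $a,b,c\in\mathbb{N}$, $d\in\mathbb{Z}$, and $\mu$ an integer with $\mu^2\equiv d\pmod{4abc^2}$. If integers $p,q$ satisfy $p^2-dq^2=\pm 4ac$ and $p\equiv\mu q\pmod{2ac}$, then $\frac{p-\mu q}{2ac}\cdot\frac{p+\mu q}{2}\equiv\pm 1\pmod{bc}$; in particular, for every prime $l$ dividing $b$ it is not the case that $p\equiv\mu q\pmod{2acl}$. -/
/-!
Write `p - μq = 2ack`, so that `(p + μq)/2 = ack + μq`. Then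
`4ac · k(ack + μq) = p² - μ²q² = ε · 4ac - (μ² - d) q²`, and since `4ac · bc ∣ μ² - d`,
cancelling `4ac` gives `k(ack + μq) ≡ ε (mod bc)`. A prime `l ∣ b` dividing `k` would
therefore divide the unit `ε`.
-/

theorem Int.dvd_mul_sub_of_sq_sub_mul_sq_eq {N M d μ p q k ε : ℤ} (hN : N ≠ 0)
    (hk : p - μ * q = 2 * N * k) (hμ : 4 * N * M ∣ μ ^ 2 - d)
    (heq : p ^ 2 - d * q ^ 2 = ε * (4 * N)) :
    M ∣ k * (N * k + μ * q) - ε := by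
  obtain ⟨m, hm⟩ := hμ
  have h : 4 * N * (k * (N * k + μ * q) - ε) = 4 * N * (M * -(m * q ^ 2)) := by
    linear_combination (-(2 * N * k + p + μ * q)) * hk + heq - q ^ 2 * hm
  exact ⟨_, mul_left_cancel₀ (mul_ne_zero four_ne_zero hN) h⟩

theorem isUnit_of_dvd_of_dvd_mul_sub {R : Type*} [CommRing R] {l M k x ε : R}
    (hε : IsUnit ε) (hM : M ∣ k * x - ε) (hlM : l ∣ M) (hlk : l ∣ k) : IsUnit l := by
  have hlε : l ∣ ε := by
    simpa using (hlk.mul_right x).sub (hlM.trans hM)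
  exact isUnit_of_dvd_unit hlε hε

theorem stmt2_general (a b c : ℕ) (ha : 1 ≤ a) (hc : 1 ≤ c) (d μ p q ε : ℤ)
    (hε : ε = 1 ∨ ε = -1)
    (hdvd : (2 * a * c : ℤ) ∣ (p - μ * q))
    (hcong : (4 * a * b * c ^ 2 : ℤ) ∣ (μ ^ 2 - d))
    (heq : p ^ 2 - d * q ^ 2 = ε * (4 * a * c)) :
    ((b * c : ℤ) ∣ ((p - μ * q) / (2 * a * c) * ((p + μ * q) / 2) - ε)) ∧
      (∀ l : ℕ, l.Prime → (l : ℤ) ∣ (b : ℤ) →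
        ¬ ((2 * a * c * l : ℤ) ∣ (p - μ * q))) := by
  obtain ⟨k, hk⟩ := hdvd
  have hac : (a * c : ℤ) ≠ 0 := by positivity
  have h2ac : (2 * a * c : ℤ) ≠ 0 := by positivity
  have hkey : (b * c : ℤ) ∣ k * (a * c * k + μ * q) - ε :=
    Int.dvd_mul_sub_of_sq_sub_mul_sq_eq hac (by rw [hk]; ring)
      (by convert hcong using 1; ring) (by rw [heq]; ring)
  have hquot : (p - μ * q) / (2 * a * c) = k := by
    rw [hk, Int.mul_ediv_cancel_left _ h2ac]
  have hhalf : (p + μ * q) / 2 = a * c * k + μ * q := by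
    rw [show p + μ * q = 2 * (a * c * k + μ * q) by linear_combination hk,
      Int.mul_ediv_cancel_left _ two_ne_zero]
  refine ⟨by rwa [hquot, hhalf], fun l hl hlb hl2 => ?_⟩
  have hlk : (l : ℤ) ∣ k := by
    rwa [hk, mul_dvd_mul_iff_left h2ac] at hl2
  exact (Nat.prime_iff_prime_int.mp hl).not_isUnit <|
    isUnit_of_dvd_of_dvd_mul_sub (Int.isUnit_iff.mpr hε) hkey (hlb.mul_right c) hlk

/-- Remark 2.1 of the paper: if `p² - d q² = ±4ac`, `p ≡ μ q (mod 2ac)` and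
`μ² ≡ d (mod 4abc²)`, then `((p-μq)/(2ac)) · ((p+μq)/2) ≡ ±1 (mod bc)`; in
particular `p ≢ μ q (mod 2acl)` for every prime `l` dividing `b`. -/
theorem stmt2 (a b c : ℕ) (ha : 1 ≤ a) (hb : 1 ≤ b) (hc : 1 ≤ c) (d μ p q ε : ℤ)
    (hε : ε = 1 ∨ ε = -1)
    (hdvd : (2 * a * c : ℤ) ∣ (p - μ * q))
    (hcong : (4 * a * b * c ^ 2 : ℤ) ∣ (μ ^ 2 - d))
    (heq : p ^ 2 - d * q ^ 2 = ε * (4 * a * c)) :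
    ((b * c : ℤ) ∣ ((p - μ * q) / (2 * a * c) * ((p + μ * q) / 2) - ε)) ∧
      (∀ l : ℕ, l.Prime → (l : ℤ) ∣ (b : ℤ) →
        ¬ ((2 * a * c * l : ℤ) ∣ (p - μ * q))) :=
  stmt2_general a b c ha hc d μ p q ε hε hdvd hcong heq
end

section
/- With $L$, $v=ac\,e_1+bc\,e_2+abc^2f_1+f_2$, $\alpha=e_1+bc\,f_1$, $\beta=e_2+ac\,f_1$, $t=-abc^2f_1+f_2$ as above: in the quotient lattice $v^\perp/\mathbb{Z}v$, the classes $\bar\alpha,\bar\beta$ form a basis, the induced bilinear form satisfies $\bar\alpha^2=\bar\beta^2=0$ and $\bar\alpha\cdot\bar\beta=-1$ (so $v^\perp/\mathbb{Z}v$ is a hyperbolic plane), and $\bar t=-ac\,\bar\alpha-bc\,\bar\beta$. -/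
/-- The bilinear form of `U⁽¹⁾ ⊕ U⁽²⁾`. -/
def BU (x y : Fin 4 → ℤ) : ℤ :=
  -(x 0 * y 1) - x 1 * y 0 + x 2 * y 3 + x 3 * y 2

/-!
Write `p = ac`, `q = bc`, so that `v = (p, q, pq, 1)`, `α = (1, 0, q, 0)`, `β = (0, 1, p, 0)` and
`t = (0, 0, -pq, 1)`, with `p, q` arbitrary integers. The condition `ξ · v = 0`
reads `ξ₂ = q ξ₀ + p ξ₁ - pq ξ₃`, so `ξ` is determined by `ξ₀, ξ₁, ξ₃`, and these are matched by
`(ξ₀ - p ξ₃) α + (ξ₁ - q ξ₃) β + ξ₃ v`, which is also the only such combination since `α, β` have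
no last coordinate.
-/

section

variable (p q : ℤ)

theorem BU_alpha_mem_orthogonal : BU ![1, 0, q, 0] ![p, q, p * q, 1] = 0 := by
  simp [BU]

theorem BU_beta_mem_orthogonal : BU ![0, 1, p, 0] ![p, q, p * q, 1] = 0 := by
  simp [BU]

theorem BU_isotropic : BU ![p, q, p * q, 1] ![p, q, p * q, 1] = 0 := by
  simp [BU]
  ring

theorem BU_exists_eq_combination_of_orthogonal (ξ : Fin 4 → ℤ)
    (hξ : BU ξ ![p, q, p * q, 1] = 0) :
    ∃ x y k : ℤ,
      ξ = fun i => x * ![1, 0, q, 0] i + y * ![0, 1, p, 0] i + k * ![p, q, p * q, 1] i := by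
  have hξ₂ : ξ 2 = q * ξ 0 + p * ξ 1 - p * q * ξ 3 := by
    simp [BU] at hξ
    linarith
  refine ⟨ξ 0 - p * ξ 3, ξ 1 - q * ξ 3, ξ 3, funext fun i => ?_⟩
  fin_cases i <;> simp [hξ₂] <;> ring

theorem eq_zero_of_combination_eq_zero (x y k : ℤ)
    (h : (fun i => x * ![1, 0, q, 0] i + y * ![0, 1, p, 0] i + k * ![p, q, p * q, 1] i) = 0) :
    x = 0 ∧ y = 0 ∧ k = 0 := by
  have h₀ := congrFun h 0
  have h₁ := congrFun h 1
  have h₃ := congrFun h 3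
  simp at h₀ h₁ h₃
  subst h₃
  exact ⟨by simpa using h₀, by simpa using h₁, rfl⟩

theorem BU_alpha_isotropic : BU ![1, 0, q, 0] ![1, 0, q, 0] = 0 := by
  simp [BU]

theorem BU_beta_isotropic : BU ![0, 1, p, 0] ![0, 1, p, 0] = 0 := by
  simp [BU]

theorem BU_alpha_beta : BU ![1, 0, q, 0] ![0, 1, p, 0] = -1 := by
  simp [BU]

theorem t_add_mul_alpha_add_mul_beta :
    (fun i => ![0, 0, -(p * q), 1] i + p * ![1, 0, q, 0] i + q * ![0, 1, p, 0] i)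
      = fun i => 1 * ![p, q, p * q, 1] i := by
  funext i
  fin_cases i <;> simp
  ring

end

theorem stmt4_general (a b c : ℕ)
    (v α β t : Fin 4 → ℤ)
    (hv : v = ![(a * c : ℤ), b * c, a * b * c ^ 2, 1])
    (hα : α = ![1, 0, (b * c : ℤ), 0])
    (hβ : β = ![0, 1, (a * c : ℤ), 0])
    (ht : t = ![0, 0, (-(a * b * c ^ 2) : ℤ), 1]) :
    -- `α, β, v` lie in `v^⊥` and `ᾱ, β̄` is a basis of `v^⊥/ℤv`:
    BU α v = 0 ∧ BU β v = 0 ∧ BU v v = 0 ∧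
    (∀ ξ : Fin 4 → ℤ, BU ξ v = 0 →
      ∃ x y k : ℤ, ξ = fun i => x * α i + y * β i + k * v i) ∧
    (∀ x y k : ℤ, (fun i => x * α i + y * β i + k * v i) = (0 : Fin 4 → ℤ) →
      x = 0 ∧ y = 0 ∧ k = 0) ∧
    -- the induced bilinear form is a hyperbolic plane:
    BU α α = 0 ∧ BU β β = 0 ∧ BU α β = -1 ∧
    -- `t̄ = -ac·ᾱ - bc·β̄`, i.e. `t + ac·α + bc·β ∈ ℤv`:
    (∃ k : ℤ, (fun i => t i + (a * c : ℤ) * α i + (b * c : ℤ) * β i)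
      = fun i => k * v i) := by
  have hpq : (a * b * c ^ 2 : ℤ) = (a * c) * (b * c) := by ring
  rw [hpq] at hv ht
  subst hv hα hβ ht
  exact ⟨BU_alpha_mem_orthogonal _ _, BU_beta_mem_orthogonal _ _, BU_isotropic _ _,
    BU_exists_eq_combination_of_orthogonal _ _, eq_zero_of_combination_eq_zero _ _,
    BU_alpha_isotropic _, BU_beta_isotropic _, BU_alpha_beta _ _, 1,
    t_add_mul_alpha_add_mul_beta _ _⟩

/-- In `v^⊥/ℤv` the classes of `α, β` form a basis, the induced form is the
hyperbolic plane (`ᾱ² = β̄² = 0`, `ᾱ·β̄ = -1`), and `t̄ = -ac·ᾱ - bc·β̄`. -/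
theorem stmt4 (a b c : ℕ) (ha : 1 ≤ a) (hb : 1 ≤ b) (hc : 1 ≤ c)
    (v α β t : Fin 4 → ℤ)
    (hv : v = ![(a * c : ℤ), b * c, a * b * c ^ 2, 1])
    (hα : α = ![1, 0, (b * c : ℤ), 0])
    (hβ : β = ![0, 1, (a * c : ℤ), 0])
    (ht : t = ![0, 0, (-(a * b * c ^ 2) : ℤ), 1]) :
    -- `α, β, v` lie in `v^⊥` and `ᾱ, β̄` is a basis of `v^⊥/ℤv`:
    BU α v = 0 ∧ BU β v = 0 ∧ BU v v = 0 ∧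
    (∀ ξ : Fin 4 → ℤ, BU ξ v = 0 →
      ∃ x y k : ℤ, ξ = fun i => x * α i + y * β i + k * v i) ∧
    (∀ x y k : ℤ, (fun i => x * α i + y * β i + k * v i) = (0 : Fin 4 → ℤ) →
      x = 0 ∧ y = 0 ∧ k = 0) ∧
    -- the induced bilinear form is a hyperbolic plane:
    BU α α = 0 ∧ BU β β = 0 ∧ BU α β = -1 ∧
    -- `t̄ = -ac·ᾱ - bc·β̄`, i.e. `t + ac·α + bc·β ∈ ℤv`:
    (∃ k : ℤ, (fun i => t i + (a * c : ℤ) * α i + (b * c : ℤ) * β i)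
      = fun i => k * v i) :=
  stmt4_general a b c v α β t hv hα hβ ht
end

section
/- Let $L=\mathbb{Z}^4$ with form $e_1\cdot e_2=-1$, $f_1\cdot f_2=1$, other basis pairings zero. Let $a,b,c,d\ge 1$ with $\gcd(d,bc)=1$, and $v_1=d^2ac\,e_1+bc\,e_2+dabc^2 f_1+d f_2$. Then $v_1^2=0$, and an element $\xi_1=x_1e_1+y_1e_2+z_1f_1+w_1f_2$ lies in $v_1^\perp$ if and only if $d\mid x_1$ and $z_1=bc(x_1/d)+dacy_1-abc^2w_1$; consequently $\alpha_1=d e_1+bc f_1$, $\beta_1=e_2+dac f_1$, $t=-abc^2 f_1+f_2$ form a $\mathbb{Z}$-basis of $v_1^\perp$. -/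
/-- For `v₁ = d²ac·e₁ + bc·e₂ + dabc²·f₁ + d·f₂` with `gcd(d,bc)=1`: `v₁² = 0`,
`ξ₁ = x₁e₁+y₁e₂+z₁f₁+w₁f₂ ∈ v₁^⊥` iff `d ∣ x₁` and
`z₁ = bc(x₁/d) + dacy₁ - abc²w₁`; consequently `α₁ = de₁ + bcf₁`,
`β₁ = e₂ + dacf₁`, `t = -abc²f₁ + f₂` form a `ℤ`-basis of `v₁^⊥`. -/
theorem stmt6 (a b c d : ℕ) (ha : 1 ≤ a) (hb : 1 ≤ b) (hc : 1 ≤ c) (hd : 1 ≤ d)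
    (hcop : Nat.gcd d (b * c) = 1)
    (v₁ α₁ β₁ t : Fin 4 → ℤ)
    (hv₁ : v₁ = ![(d ^ 2 * a * c : ℤ), b * c, d * a * b * c ^ 2, d])
    (hα₁ : α₁ = ![(d : ℤ), 0, b * c, 0])
    (hβ₁ : β₁ = ![0, 1, (d * a * c : ℤ), 0])
    (ht : t = ![0, 0, (-(a * b * c ^ 2) : ℤ), 1]) :
    BU v₁ v₁ = 0 ∧
    (∀ x₁ y₁ z₁ w₁ : ℤ, BU ![x₁, y₁, z₁, w₁] v₁ = 0 ↔
      ((d : ℤ) ∣ x₁ ∧ z₁ = b * c * (x₁ / d) + d * a * c * y₁ - a * b * c ^ 2 * w₁)) ∧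
    (∀ ξ : Fin 4 → ℤ, BU ξ v₁ = 0 ↔
      ∃ x y w : ℤ, ξ = fun i => x * α₁ i + y * β₁ i + w * t i) ∧
    (∀ x y w : ℤ, (fun i => x * α₁ i + y * β₁ i + w * t i) = (0 : Fin 4 → ℤ) →
      x = 0 ∧ y = 0 ∧ w = 0) := by
  have hd0 : (d : ℤ) ≠ 0 := by positivity
  have hcopZ : IsCoprime (d : ℤ) ((b : ℤ) * c) := by
    rw [Int.isCoprime_iff_gcd_eq_one]
    simpa [Int.gcd, Int.natAbs_mul] using hcop
  have key : ∀ x₁ y₁ z₁ w₁ : ℤ, BU ![x₁, y₁, z₁, w₁] v₁ = 0 ↔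
      ((d : ℤ) ∣ x₁ ∧ z₁ = b * c * (x₁ / d) + d * a * c * y₁ - a * b * c ^ 2 * w₁) := by
    intro x₁ y₁ z₁ w₁
    simp only [hv₁, BU, Matrix.cons_val_zero, Matrix.cons_val_one, Matrix.head_cons,
      Matrix.cons_val_two, Matrix.tail_cons, Matrix.cons_val_three]
    constructor
    · intro h
      have hdvd : (d : ℤ) ∣ x₁ := by
        have hh : (d : ℤ) ∣ (b : ℤ) * c * x₁ :=
          ⟨z₁ - y₁ * ((d : ℤ) * a * c) + w₁ * (a * b * c ^ 2), by linear_combination -h⟩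
        exact hcopZ.dvd_of_dvd_mul_left hh
      refine ⟨hdvd, ?_⟩
      obtain ⟨k, hk⟩ := hdvd
      have hdiv : x₁ / d = k := by rw [hk]; exact Int.mul_ediv_cancel_left k hd0
      rw [hdiv]
      have : (d : ℤ) * z₁ = d * (b * c * k + d * a * c * y₁ - a * b * c ^ 2 * w₁) := by
        linear_combination h + (b : ℤ) * c * hk
      exact mul_left_cancel₀ hd0 this
    · rintro ⟨⟨k, hk⟩, hz⟩
      have hdiv : x₁ / d = k := by rw [hk]; exact Int.mul_ediv_cancel_left k hd0
      rw [hz, hdiv, hk]; ring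
  refine ⟨?_, key, ?_, ?_⟩
  · simp only [hv₁, BU, Matrix.cons_val_zero, Matrix.cons_val_one, Matrix.head_cons,
      Matrix.cons_val_two, Matrix.tail_cons, Matrix.cons_val_three]
    ring
  · intro ξ
    have hξ : ξ = ![ξ 0, ξ 1, ξ 2, ξ 3] := by
      funext i; fin_cases i <;> rfl
    constructor
    · intro h
      rw [hξ] at h
      obtain ⟨⟨k, hk⟩, hz⟩ := (key (ξ 0) (ξ 1) (ξ 2) (ξ 3)).mp h
      have hdiv : ξ 0 / d = k := by rw [hk]; exact Int.mul_ediv_cancel_left k hd0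
      refine ⟨k, ξ 1, ξ 3, ?_⟩
      funext i
      fin_cases i <;>
        simp [hα₁, hβ₁, ht] <;>
        [skip; skip] <;> first
        | (rw [hk]; ring)
        | (rw [hz, hdiv]; ring)
    · rintro ⟨x, y, w, rfl⟩
      simp only [BU, hα₁, hβ₁, ht, hv₁, Matrix.cons_val_zero, Matrix.cons_val_one,
        Matrix.head_cons, Matrix.cons_val_two, Matrix.tail_cons, Matrix.cons_val_three]
      ring
  · intro x y w h
    have h0 := congrFun h 0
    have h1 := congrFun h 1
    have h3 := congrFun h 3
    simp [hα₁, hβ₁, ht] at h0 h1 h3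
    refine ⟨?_, h1, h3⟩
    rcases h0 with h0 | h0
    · exact h0
    · exact absurd h0 (by omega)
end

section
/- With $v_1=d^2ac\,e_1+bc\,e_2+dabc^2f_1+df_2$ and basis $\alpha_1=de_1+bcf_1$, $\beta_1=e_2+dacf_1$, $t=-abc^2f_1+f_2$ of $v_1^\perp$ as above, with $\gcd(d,bc)=1$: in $v_1^\perp/\mathbb{Z}v_1$ one has $t\bmod\mathbb{Z}v_1=c\,\tilde t_1$ and $\beta_1\bmod\mathbb{Z}v_1=d\,\tilde\beta_1$ for (unique) elements $\tilde t_1,\tilde\beta_1$, the classes $\bar\alpha_1=\alpha_1\bmod\mathbb{Z}v_1$ and $\tilde\beta_1$ form a basis with $\bar\alpha_1^2=\tilde\beta_1^2=0$, $\bar\alpha_1\cdot\tilde\beta_1=-1$, and $a\,\bar\alpha_1+b\,\tilde\beta_1+\tilde t_1=0$. -/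
/-- In `v₁^⊥/ℤv₁` one has `t̄ = c·t̃₁`, `β̄₁ = d·β̃₁` for unique classes
`t̃₁, β̃₁`; the classes `ᾱ₁, β̃₁` form a basis with `ᾱ₁² = β̃₁² = 0`,
`ᾱ₁·β̃₁ = -1`, and `a·ᾱ₁ + b·β̃₁ + t̃₁ = 0`.  (Classes of `v₁^⊥/ℤv₁` are
represented by vectors `bb, tt ∈ v₁^⊥`, equality of classes being equality
modulo `ℤv₁`.) -/
theorem stmt7 (a b c d : ℕ) (ha : 1 ≤ a) (hb : 1 ≤ b) (hc : 1 ≤ c) (hd : 1 ≤ d)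
    (hcop : Nat.gcd d (b * c) = 1)
    (v₁ α₁ β₁ t : Fin 4 → ℤ)
    (hv₁ : v₁ = ![(d ^ 2 * a * c : ℤ), b * c, d * a * b * c ^ 2, d])
    (hα₁ : α₁ = ![(d : ℤ), 0, b * c, 0])
    (hβ₁ : β₁ = ![0, 1, (d * a * c : ℤ), 0])
    (ht : t = ![0, 0, (-(a * b * c ^ 2) : ℤ), 1]) :
    ∃ bb tt : Fin 4 → ℤ,
      -- `bb, tt ∈ v₁^⊥` represent `β̃₁` and `t̃₁`:
      BU bb v₁ = 0 ∧ BU tt v₁ = 0 ∧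
      -- `β̄₁ = d·β̃₁` and `t̄ = c·t̃₁` in the quotient:
      (∃ k : ℤ, β₁ = fun i => (d : ℤ) * bb i + k * v₁ i) ∧
      (∃ k : ℤ, t = fun i => (c : ℤ) * tt i + k * v₁ i) ∧
      -- uniqueness of the classes `β̃₁`, `t̃₁`:
      (∀ bb' : Fin 4 → ℤ, BU bb' v₁ = 0 →
        (∃ k : ℤ, β₁ = fun i => (d : ℤ) * bb' i + k * v₁ i) →
        ∃ k : ℤ, bb' = fun i => bb i + k * v₁ i) ∧
      (∀ tt' : Fin 4 → ℤ, BU tt' v₁ = 0 →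
        (∃ k : ℤ, t = fun i => (c : ℤ) * tt' i + k * v₁ i) →
        ∃ k : ℤ, tt' = fun i => tt i + k * v₁ i) ∧
      -- `ᾱ₁, β̃₁` form a basis of `v₁^⊥/ℤv₁`:
      (∀ ξ : Fin 4 → ℤ, BU ξ v₁ = 0 →
        ∃ x y k : ℤ, ξ = fun i => x * α₁ i + y * bb i + k * v₁ i) ∧
      (∀ x y k : ℤ, (fun i => x * α₁ i + y * bb i + k * v₁ i) = (0 : Fin 4 → ℤ) →
        x = 0 ∧ y = 0 ∧ k = 0) ∧
      -- the Gram matrix is the hyperbolic plane: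
      BU α₁ α₁ = 0 ∧ BU bb bb = 0 ∧ BU α₁ bb = -1 ∧
      -- `a·ᾱ₁ + b·β̃₁ + t̃₁ = 0`:
      (∃ k : ℤ, (fun i => (a : ℤ) * α₁ i + (b : ℤ) * bb i + tt i)
        = fun i => k * v₁ i) := by
  have hd0 : (d : ℤ) ≠ 0 := by exact_mod_cast Nat.one_le_iff_ne_zero.mp hd
  have hc0 : (c : ℤ) ≠ 0 := by exact_mod_cast Nat.one_le_iff_ne_zero.mp hc
  have hdbc : IsCoprime (d : ℤ) ((b : ℤ) * c) := by
    rw [Int.isCoprime_iff_gcd_eq_one]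
    have h : ((b : ℤ) * c) = ((b * c : ℕ) : ℤ) := by push_cast; ring
    rw [h, Int.gcd_natCast_natCast, hcop]
  have hcd : IsCoprime (c : ℤ) (d : ℤ) := by
    rw [Int.isCoprime_iff_gcd_eq_one, Int.gcd_natCast_natCast]
    exact (Nat.Coprime.coprime_dvd_right (dvd_mul_left c b) hcop).symm
  obtain ⟨s, u, H1⟩ := hdbc
  obtain ⟨r, w, H2⟩ := hcd
  have hdbc : IsCoprime (d : ℤ) ((b : ℤ) * c) := ⟨s, u, H1⟩
  have hcd : IsCoprime (c : ℤ) (d : ℤ) := ⟨r, w, H2⟩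
  -- H1 : s * d + u * (b * c) = 1,  H2 : r * c + w * d = 1
  have Hk : ((s : ℤ) - w) * d = (r - u * b) * c := by linear_combination H1 - H2
  have hcsw : (c : ℤ) ∣ (s - w) := by
    refine hcd.dvd_of_dvd_mul_right ⟨r - u * b, ?_⟩
    linear_combination Hk
  obtain ⟨k₀, H3⟩ := hcsw
  have H4 : (r : ℤ) - u * b = d * k₀ := by
    apply mul_right_cancel₀ hc0
    linear_combination -Hk + d * H3
  subst hv₁ hα₁ hβ₁ ht
  set V : Fin 4 → ℤ := ![(d ^ 2 * a * c : ℤ), b * c, d * a * b * c ^ 2, d] with hV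
  set A : Fin 4 → ℤ := ![(d : ℤ), 0, b * c, 0] with hA
  set B : Fin 4 → ℤ := ![-(u * d * a * c), s, a * c - u * a * b * c ^ 2, -u] with hB
  set T : Fin 4 → ℤ := ![-(w * d ^ 2 * a), -(w * b), -(a * b * c) - w * d * a * b * c, r] with hT
  have hβeq : ∀ i, (![0, 1, (d * a * c : ℤ), 0] : Fin 4 → ℤ) i = (d : ℤ) * B i + u * V i := by
    intro i
    fin_cases i <;> simp [hB, hV]
    · ring
    · linear_combination -H1
    · ring
    · ring
  have hteq : ∀ i, (![0, 0, (-(a * b * c ^ 2) : ℤ), 1] : Fin 4 → ℤ) i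
      = (c : ℤ) * T i + w * V i := by
    intro i
    fin_cases i <;> simp [hT, hV]
    · ring
    · ring
    · ring
    · linear_combination -H2
  refine ⟨B, T, ?_, ?_, ⟨u, funext fun i => hβeq i⟩, ⟨w, funext fun i => hteq i⟩,
    ?_, ?_, ?_, ?_, ?_, ?_, ?_, ?_⟩
  · simp [BU, hB, hV]; linear_combination -(d : ℤ) * a * c * H1
  · simp [BU, hT, hV]; linear_combination (d : ℤ) * a * b * c * H2
  · -- uniqueness of β̃₁
    rintro bb' _ ⟨k', hk'⟩
    have e1 : (1 : ℤ) = (d : ℤ) * bb' 1 + k' * (b * c) := by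
      have e := congrFun hk' 1
      simpa [hV] using e
    have hdvd : (d : ℤ) ∣ (u - k') := by
      refine hdbc.dvd_of_dvd_mul_right ⟨bb' 1 - s, ?_⟩
      linear_combination e1 + H1
    obtain ⟨k, hk⟩ := hdvd
    refine ⟨k, funext fun i => ?_⟩
    have e := congrFun hk' i
    apply mul_left_cancel₀ hd0
    have hBe := hβeq i
    linear_combination hBe - e + (V i) * hk
  · -- uniqueness of t̃₁
    rintro tt' _ ⟨k', hk'⟩
    have e3 : (1 : ℤ) = (c : ℤ) * tt' 3 + k' * d := by
      have e := congrFun hk' 3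
      simpa [hV] using e
    have hdvd : (c : ℤ) ∣ (w - k') := by
      refine hcd.dvd_of_dvd_mul_right ⟨tt' 3 - r, ?_⟩
      linear_combination e3 + H2
    obtain ⟨k, hk⟩ := hdvd
    refine ⟨k, funext fun i => ?_⟩
    have e := congrFun hk' i
    apply mul_left_cancel₀ hc0
    have hTe := hteq i
    linear_combination hTe - e + (V i) * hk
  · -- spanning
    intro ξ hξ
    simp [BU, hV] at hξ
    have hdvd : (d : ℤ) ∣ ξ 0 := by
      refine hdbc.dvd_of_dvd_mul_right ⟨-(ξ 1) * d * a * c + ξ 2 + ξ 3 * a * b * c ^ 2, ?_⟩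
      linear_combination -hξ
    obtain ⟨m, hm⟩ := hdvd
    have hξ2 : ξ 2 = m * (b * c) + ξ 1 * (d * a * c) - ξ 3 * (a * b * c ^ 2) := by
      apply mul_left_cancel₀ hd0
      linear_combination hξ + (b : ℤ) * c * hm
    refine ⟨m - ξ 3 * c * a, ξ 1 * d - ξ 3 * c * b, ξ 1 * u + ξ 3 * c * k₀ + ξ 3 * w,
      funext fun i => ?_⟩
    fin_cases i <;> simp [hA, hB, hV]
    · linear_combination hm + d * a * c * ξ 3 * c * H4 - d * a * c * ξ 3 * H2
    · linear_combination -(ξ 1) * H1 + ξ 3 * c * b * H3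
    · linear_combination hξ2 + a * b * c ^ 2 * ξ 3 * c * H4 - a * b * c ^ 2 * ξ 3 * H2
    · linear_combination ξ 3 * c * H4 - ξ 3 * H2
  · -- independence
    intro x y k h
    have e0 := congrFun h 0
    have e1 := congrFun h 1
    have e3 := congrFun h 3
    simp [hA, hB, hV] at e0 e1 e3
    have hx : (d : ℤ) * x = 0 := by linear_combination e0 - d * a * c * e3
    have hx0 : x = 0 := by
      rcases mul_eq_zero.mp hx with h' | h'
      · exact absurd h' hd0
      · exact h'
    have hy0 : y = 0 := by linear_combination d * e1 - b * c * e3 - y * H1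
    have hkd : (d : ℤ) * k = 0 := by linear_combination e3 + u * hy0
    have hk0 : k = 0 := by
      rcases mul_eq_zero.mp hkd with h' | h'
      · exact absurd h' hd0
      · exact h'
    exact ⟨hx0, hy0, hk0⟩
  · simp [BU, hA]
  · simp [BU, hB]; linear_combination 2 * u * a * c * H1
  · simp [BU, hA, hB]; linear_combination -H1
  · refine ⟨k₀, funext fun i => ?_⟩
    fin_cases i <;> simp [hA, hB, hT, hV]
    · linear_combination -(a : ℤ) * d * H1 + a * d ^ 2 * H3
    · linear_combination (b : ℤ) * H3
    · linear_combination -(a : ℤ) * b * c * H1 + a * b * c * d * H3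
    · linear_combination H4
end

section
/- In the lattice $N$ of the previous context (with $H^2=2abc^2$, $\gcd$ conventions as stated), suppose $h_1=\frac{rH+s\delta}{2abc^2}\in N$ satisfies $h_1^2=\pm 2bc$ and $H\cdot h_1\equiv 0\pmod{bc}$. Then $bc\mid r$ and $bc\mid s$, and writing $r=pbc$, $s=qbc$, the integers $p,q$ satisfy $p\equiv\mu q\pmod{2ac}$ and $p^2-dq^2=\pm 4ac$. -/
theorem dvd_of_dvd_sub_mul_of_isCoprime {R : Type*} [CommRing R] {μ m n r s : R}
    (hμ : IsCoprime μ m) (hnm : n ∣ m) (hmem : m ∣ r - μ * s) (hr : n ∣ r) : n ∣ s := by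
  have hμs : n ∣ μ * s := by simpa using dvd_sub hr (hnm.trans hmem)
  exact (hμ.of_isCoprime_of_dvd_right hnm).symm.dvd_of_dvd_mul_left hμs

theorem stmt11_general (a b c : ℕ) (hb : 1 ≤ b) (hc : 1 ≤ c) (d μ : ℤ)
    (hμ : IsCoprime μ (2 * a * b * c ^ 2 : ℤ))
    (r s ε : ℤ)
    (hmem : (2 * a * b * c ^ 2 : ℤ) ∣ (r - μ * s))
    (hsq : r ^ 2 - d * s ^ 2 = ε * (2 * b * c) * (2 * a * b * c ^ 2))
    (hHh₁ : (b * c : ℤ) ∣ r) :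
    (b * c : ℤ) ∣ r ∧ (b * c : ℤ) ∣ s ∧
    (2 * a * c : ℤ) ∣ (r / (b * c) - μ * (s / (b * c))) ∧
    (r / (b * c)) ^ 2 - d * (s / (b * c)) ^ 2 = ε * (4 * a * c) := by
  have hbc : (b * c : ℤ) ≠ 0 := by positivity
  have hlevel : (2 * a * b * c ^ 2 : ℤ) = b * c * (2 * a * c) := by ring
  have hs : (b * c : ℤ) ∣ s :=
    dvd_of_dvd_sub_mul_of_isCoprime hμ (hlevel ▸ dvd_mul_right _ _) hmem hHh₁
  refine ⟨hHh₁, hs, ?_⟩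
  obtain ⟨p, rfl⟩ := hHh₁
  obtain ⟨q, rfl⟩ := hs
  simp only [Int.mul_ediv_cancel_left _ hbc]
  constructor
  · rw [hlevel, show (b * c * p - μ * (b * c * q) : ℤ) = b * c * (p - μ * q) by ring] at hmem
    exact (mul_dvd_mul_iff_left hbc).mp hmem
  · refine mul_left_cancel₀ (pow_ne_zero 2 hbc) ?_
    linear_combination hsq

/-- If `h₁ = (rH + sδ)/(2abc²) ∈ N` (i.e. `r ≡ μs (mod 2abc²)`) satisfies
`h₁² = ±2bc` (i.e. `r² - ds² = ±2bc·2abc²`) and `H·h₁ = r ≡ 0 (mod bc)`, then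
`bc ∣ r`, `bc ∣ s`, and `p = r/bc`, `q = s/bc` satisfy `p ≡ μq (mod 2ac)` and
`p² - dq² = ±4ac`. -/
theorem stmt11 (a b c : ℕ) (ha : 1 ≤ a) (hb : 1 ≤ b) (hc : 1 ≤ c) (d μ : ℤ)
    (hμ : IsCoprime μ (2 * a * b * c ^ 2 : ℤ))
    (hcong : (4 * a * b * c ^ 2 : ℤ) ∣ (μ ^ 2 - d))
    (r s ε : ℤ) (hε : ε = 1 ∨ ε = -1)
    (hmem : (2 * a * b * c ^ 2 : ℤ) ∣ (r - μ * s))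
    (hsq : r ^ 2 - d * s ^ 2 = ε * (2 * b * c) * (2 * a * b * c ^ 2))
    (hHh₁ : (b * c : ℤ) ∣ r) :
    (b * c : ℤ) ∣ r ∧ (b * c : ℤ) ∣ s ∧
    (2 * a * c : ℤ) ∣ (r / (b * c) - μ * (s / (b * c))) ∧
    (r / (b * c)) ^ 2 - d * (s / (b * c)) ^ 2 = ε * (4 * a * c) :=
  stmt11_general a b c hb hc d μ hμ r s ε hmem hsq hHh₁
end

section
/- Let $a,b,c\ge 1$ be integers, $d\in\mathbb{Z}$, $\mu$ invertible modulo $2abc^2$ with $\mu^2\equiv d\pmod{4abc^2}$. Define two solution sets: $S_1=\{(p,q)\in\mathbb{Z}^2 : p^2-dq^2=\pm4ac,\ p\equiv\mu q\ (\mathrm{mod}\ 2ac)\}$ and $S_2=\{(p,q)\in S_1 : \gcd(a,p,q)=1\text{ and for every prime }l\mid b,\ p\not\equiv\mu q\ (\mathrm{mod}\ 2acl)\}$. Then $S_1=S_2$. -/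
/-- Remark 2.1 of the paper: the solution set of `p² - dq² = ±4ac`,
`p ≡ μq (mod 2ac)` coincides with its subset where additionally `(a,p,q) = 1`
and `p ≢ μq (mod 2acl)` for every prime `l ∣ b`. -/
theorem stmt17 (a b c : ℕ) (ha : 1 ≤ a) (hb : 1 ≤ b) (hc : 1 ≤ c) (d μ ε : ℤ)
    (hε : ε = 1 ∨ ε = -1)
    (hμ : IsCoprime μ (2 * a * b * c ^ 2 : ℤ))
    (hcong : (4 * a * b * c ^ 2 : ℤ) ∣ (μ ^ 2 - d)) :
    {pq : ℤ × ℤ | pq.1 ^ 2 - d * pq.2 ^ 2 = ε * (4 * a * c) ∧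
        (2 * a * c : ℤ) ∣ (pq.1 - μ * pq.2)} =
      {pq : ℤ × ℤ | (pq.1 ^ 2 - d * pq.2 ^ 2 = ε * (4 * a * c) ∧
        (2 * a * c : ℤ) ∣ (pq.1 - μ * pq.2)) ∧
        Nat.gcd a (Int.gcd pq.1 pq.2) = 1 ∧
        ∀ l : ℕ, l.Prime → (l : ℤ) ∣ (b : ℤ) →
          ¬ ((2 * a * c * l : ℤ) ∣ (pq.1 - μ * pq.2))} := by
  ext ⟨p, q⟩
  simp only [Set.mem_setOf_eq]
  constructor
  · rintro ⟨heq, hdvd⟩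
    obtain ⟨m, hm⟩ := hdvd
    obtain ⟨t, ht⟩ := hcong
    have ha0 : (0:ℤ) < (a:ℤ) := by exact_mod_cast ha
    have hc0 : (0:ℤ) < (c:ℤ) := by exact_mod_cast hc
    have h2ac : (2 * a * c : ℤ) ≠ 0 := by positivity
    have h4ac : (4 * (a:ℤ) * c : ℤ) ≠ 0 := by positivity
    have hp : p = μ * q + 2 * a * c * m := by linarith
    have hd : d = μ ^ 2 - 4 * a * b * c ^ 2 * t := by linarith
    have key : ε = b * c * t * q ^ 2 + m * μ * q + a * c * m ^ 2 := by
      have h : ε * (4 * (a:ℤ) * c) =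
          ((b:ℤ) * c * t * q ^ 2 + m * μ * q + a * c * m ^ 2) * (4 * a * c) := by
        rw [← heq, hp, hd]; ring
      exact mul_right_cancel₀ h4ac h
    have unit_contra : ∀ l : ℕ, l.Prime → (l : ℤ) ∣ ε → False := by
      intro l hl hle
      have h1 : (l : ℤ) ∣ 1 := by
        rcases hε with h | h
        · rwa [h] at hle
        · rw [h] at hle; exact (dvd_neg).mp hle
      have : l ∣ 1 := by exact_mod_cast h1
      exact absurd (Nat.dvd_one.mp this) hl.one_lt.ne'
    refine ⟨⟨heq, ⟨m, hm⟩⟩, ?_, ?_⟩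
    · by_contra hg
      set g := Nat.gcd a (Int.gcd p q) with hgdef
      have hgp : g.minFac.Prime := Nat.minFac_prime hg
      have hla : g.minFac ∣ a := (Nat.minFac_dvd g).trans (Nat.gcd_dvd_left _ _)
      have hlg : g.minFac ∣ Int.gcd p q := (Nat.minFac_dvd g).trans (Nat.gcd_dvd_right _ _)
      have hlq : ((g.minFac : ℤ)) ∣ q := (Int.natCast_dvd_natCast.mpr hlg).trans (Int.gcd_dvd_right p q)
      have hla' : ((g.minFac : ℤ)) ∣ (a:ℤ) := Int.natCast_dvd_natCast.mpr hla
      refine unit_contra g.minFac hgp ?_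
      rw [key]
      exact dvd_add (dvd_add (Dvd.dvd.mul_left (dvd_pow hlq two_ne_zero) _)
        (Dvd.dvd.mul_left hlq _)) (Dvd.dvd.mul_right (hla'.mul_right _) _)
    · intro l hl hlb hdvd'
      obtain ⟨m', hm'⟩ := hdvd'
      have hlm : (l : ℤ) ∣ m := by
        refine ⟨m', ?_⟩
        have h : (2 * (a:ℤ) * c) * m = (2 * a * c) * ((l:ℤ) * m') := by
          rw [← hm] at *; linarith [hm']
        exact mul_left_cancel₀ h2ac h
      refine unit_contra l hl ?_
      rw [key]
      exact dvd_add (dvd_add (Dvd.dvd.mul_right ((hlb.mul_right _).mul_right _) _)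
        (Dvd.dvd.mul_right (hlm.mul_right _) _))
        (Dvd.dvd.mul_left (dvd_pow hlm two_ne_zero) _)
  · rintro ⟨h, _, _⟩
    exact h
end
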